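/- Scaling identity for Hermite polynomials: for any λ ∈ ℝ and n ∈ ℕ, H_n(λx) = Σ_{p=0}^{⌊n/2⌋} λ^{n-2p} (λ² - 1)^p · C(n, 2p) · (2p)!/p! · H_{n-2p}(x). -/

import Mathlib

noncomputable def H : ℕ → ℝ → ℝ
  | 0, _ => 1
  | 1, x => 2 * x
  | n + 2, x => 2 * x * H (n + 1) x - 2 * ((n : ℝ) + 1) * H n x

/-!
Induction on `n` through the three-term recurrence. Expanding `2λx H_{n+1}(λx)` with
`2x H_m = H_{m+1} + 2m H_{m-1}` and subtracting `2(n+1) H_n(λx)` reduces the claim to a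
recurrence for the coefficients. With `b(n,p) = n!/(p!(n-2p)!)` that recurrence follows from
`b(n+2,p+1) = b(n+1,p+1) + 2(n+1) b(n,p)` and `(n+1-2p) b(n+1,p) = (n+1) b(n,p)`, the second one
absorbing the extra factor `λ²` into `(λ² - 1)^(p+1)`.
-/

open Finset

theorem H_add_two (n : ℕ) (x : ℝ) :
    H (n + 2) x = 2 * x * H (n + 1) x - 2 * ((n : ℝ) + 1) * H n x :=
  rfl

/-- At `m = 0` the truncated `H (0 - 1)` carries the factor `0`. -/
theorem two_mul_mul_H (m : ℕ) (x : ℝ) :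
    2 * x * H m x = H (m + 1) x + 2 * (m : ℝ) * H (m - 1) x := by
  cases m with
  | zero => simp [H]
  | succ m => rw [H_add_two, Nat.add_sub_cancel]; push_cast; ring

/-- `n! / (p! (n - 2p)!)`, which is `2 ^ p` times the number of `p`-edge matchings of `K_n`. -/
noncomputable def pairingCoeff (n p : ℕ) : ℝ :=
  (n.choose (2 * p) : ℝ) * (((2 * p).factorial : ℝ) / (p.factorial : ℝ))

theorem pairingCoeff_eq_zero_of_lt {n p : ℕ} (h : n < 2 * p) : pairingCoeff n p = 0 := by
  simp [pairingCoeff, Nat.choose_eq_zero_of_lt h]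

/-- Vertex `n + 2` of `K_{n+2}` is either unmatched or matched to one of the other `n + 1`. -/
theorem pairingCoeff_add_two_succ (n p : ℕ) :
    pairingCoeff (n + 2) (p + 1)
      = pairingCoeff (n + 1) (p + 1) + 2 * (n + 1) * pairingCoeff n p := by
  have hchoose :
      ((n + 1 : ℕ) : ℝ) * n.choose (2 * p) = (n + 1).choose (2 * p + 1) * (2 * p + 1) := by
    exact_mod_cast Nat.add_one_mul_choose_eq n (2 * p)
  simp only [pairingCoeff, show 2 * (p + 1) = 2 * p + 1 + 1 by ring, Nat.factorial_succ]
  rw [Nat.choose_succ_succ' (n + 1)]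
  push_cast at hchoose ⊢
  field_simp
  linear_combination (-2 * ((p : ℝ) + 1)) * hchoose

theorem cast_sub_mul_pairingCoeff_succ (n p : ℕ) :
    ((n + 1 - 2 * p : ℕ) : ℝ) * pairingCoeff (n + 1) p = (n + 1) * pairingCoeff n p := by
  have hchoose : (n.choose (2 * p) : ℝ) * (n + 1)
      = (n + 1).choose (2 * p) * ((n + 1 - 2 * p : ℕ) : ℝ) := by
    exact_mod_cast Nat.choose_mul_succ_eq n (2 * p)
  simp only [pairingCoeff]
  linear_combination (((2 * p).factorial : ℝ) / (p.factorial : ℝ)) * hchoose.symm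

noncomputable def scalingCoeff (lam : ℝ) (n p : ℕ) : ℝ :=
  lam ^ (n - 2 * p) * (lam ^ 2 - 1) ^ p * pairingCoeff n p

theorem scalingCoeff_eq_zero_of_lt (lam : ℝ) {n p : ℕ} (h : n < 2 * p) :
    scalingCoeff lam n p = 0 := by
  rw [scalingCoeff, pairingCoeff_eq_zero_of_lt h, mul_zero]

theorem scalingCoeff_zero_right (lam : ℝ) (n : ℕ) : scalingCoeff lam n 0 = lam ^ n := by
  simp [scalingCoeff, pairingCoeff]

/-- The truncated exponent `n - 2p` is harmless: where it truncates, `pairingCoeff n p` vanishes. -/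
theorem pow_mul_scalingCoeff (lam : ℝ) (k n p : ℕ) :
    lam ^ k * scalingCoeff lam n p
      = lam ^ (n + k - 2 * p) * (lam ^ 2 - 1) ^ p * pairingCoeff n p := by
  rcases le_or_gt (2 * p) n with h | h
  · rw [scalingCoeff, show n + k - 2 * p = n - 2 * p + k by omega, pow_add]
    ring
  · rw [scalingCoeff, pairingCoeff_eq_zero_of_lt h]
    ring

theorem scalingCoeff_add_two_succ (lam : ℝ) (n q : ℕ) :
    scalingCoeff lam (n + 2) (q + 1) = lam * scalingCoeff lam (n + 1) (q + 1)
      + 2 * lam * ((n + 1 - 2 * q : ℕ) : ℝ) * scalingCoeff lam (n + 1) q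
      - 2 * ((n : ℝ) + 1) * scalingCoeff lam n q := by
  have hfirst : lam * scalingCoeff lam (n + 1) (q + 1)
      = lam ^ (n - 2 * q) * (lam ^ 2 - 1) ^ (q + 1) * pairingCoeff (n + 1) (q + 1) := by
    nth_rewrite 1 [← pow_one lam]
    rw [pow_mul_scalingCoeff, show n + 1 + 1 - 2 * (q + 1) = n - 2 * q by omega]
  have hsecond : lam * ((n + 1 - 2 * q : ℕ) : ℝ) * scalingCoeff lam (n + 1) q
      = ((n : ℝ) + 1) * (lam ^ 2 * scalingCoeff lam n q) := by
    rw [pow_mul_scalingCoeff, mul_comm lam, mul_assoc]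
    nth_rewrite 1 [← pow_one lam]
    rw [pow_mul_scalingCoeff, show n + 1 + 1 - 2 * q = n + 2 - 2 * q by omega]
    linear_combination
      lam ^ (n + 2 - 2 * q) * (lam ^ 2 - 1) ^ q * cast_sub_mul_pairingCoeff_succ n q
  rw [mul_assoc 2, mul_assoc 2, hfirst, hsecond, scalingCoeff, scalingCoeff,
    show n + 2 - 2 * (q + 1) = n - 2 * q by omega, pairingCoeff_add_two_succ]
  ring

theorem two_mul_mul_sum_scalingCoeff (lam x : ℝ) {n M : ℕ} (hM : n < 2 * M) :
    2 * (lam * x) * ∑ p ∈ range (M + 1), scalingCoeff lam (n + 1) p * H (n + 1 - 2 * p) x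
      = lam ^ (n + 2) * H (n + 2) x
        + ∑ q ∈ range M, (lam * scalingCoeff lam (n + 1) (q + 1)
          + 2 * lam * ((n + 1 - 2 * q : ℕ) : ℝ) * scalingCoeff lam (n + 1) q)
            * H (n - 2 * q) x := by
  have hterm (p : ℕ) : 2 * (lam * x) * (scalingCoeff lam (n + 1) p * H (n + 1 - 2 * p) x)
      = lam * scalingCoeff lam (n + 1) p * H (n + 2 - 2 * p) x
        + 2 * lam * ((n + 1 - 2 * p : ℕ) : ℝ) * scalingCoeff lam (n + 1) p
          * H (n - 2 * p) x := by
    rcases le_or_gt (2 * p) (n + 1) with hp | hp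
    · have h := two_mul_mul_H (n + 1 - 2 * p) x
      rw [show n + 1 - 2 * p + 1 = n + 2 - 2 * p by omega,
        show n + 1 - 2 * p - 1 = n - 2 * p by omega] at h
      linear_combination lam * scalingCoeff lam (n + 1) p * h
    · simp [scalingCoeff_eq_zero_of_lt lam hp]
  rw [mul_sum, sum_congr rfl fun p _ => hterm p, sum_add_distrib, sum_range_succ',
    sum_range_succ _ M, show n + 1 - 2 * M = 0 by omega]
  simp only [add_mul, sum_add_distrib, scalingCoeff_zero_right, Nat.cast_zero, mul_zero,
    zero_mul, add_zero]
  rw [Nat.sub_zero, pow_succ']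
  simp only [fun q : ℕ => show n + 2 - 2 * (q + 1) = n - 2 * q by omega]
  ring

theorem H_mul_eq_sum_scalingCoeff (lam x : ℝ) (n : ℕ) :
    ∀ N, n < 2 * N →
      H n (lam * x) = ∑ p ∈ range N, scalingCoeff lam n p * H (n - 2 * p) x := by
  induction n using Nat.twoStepInduction with
  | zero =>
    intro N hN
    rw [sum_eq_single_of_mem 0 (mem_range.2 (by omega))]
    · simp [H, scalingCoeff_zero_right]
    · intro p _ hp
      rw [scalingCoeff_eq_zero_of_lt lam (by omega), zero_mul]
  | one =>
    intro N hN
    rw [sum_eq_single_of_mem 0 (mem_range.2 (by omega))]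
    · simp [H, scalingCoeff_zero_right]
      ring
    · intro p _ hp
      rw [scalingCoeff_eq_zero_of_lt lam (by omega), zero_mul]
  | more n ih ih' =>
    intro N hN
    obtain ⟨M, rfl⟩ : ∃ M, N = M + 1 := ⟨N - 1, by omega⟩
    rw [H_add_two, ih' (M + 1) (by omega), ih M (by omega),
      two_mul_mul_sum_scalingCoeff lam x (by omega), mul_sum, sum_range_succ',
      scalingCoeff_zero_right, add_sub_assoc, ← sum_sub_distrib, add_comm]
    congr 1
    refine sum_congr rfl fun q _ => ?_
    rw [scalingCoeff_add_two_succ, show n + 2 - 2 * (q + 1) = n - 2 * q by omega]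
    ring

theorem hermite_scaling (lam : ℝ) (n : ℕ) (x : ℝ) :
    H n (lam * x) = ∑ p ∈ Finset.range (n / 2 + 1),
      lam ^ (n - 2 * p) * (lam ^ 2 - 1) ^ p * (n.choose (2 * p) : ℝ)
        * (((2 * p).factorial : ℝ) / (p.factorial : ℝ)) * H (n - 2 * p) x := by
  rw [H_mul_eq_sum_scalingCoeff lam x n (n / 2 + 1) (by omega)]
  simp only [scalingCoeff, pairingCoeff, mul_assoc]
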